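/- arXiv:2411.00708 — 10 statements merged into one kernel-verified Lean document; each statement's English description precedes it below -/
import Mathlib

section
/- Let G be a DAG on X and v a vertex that is a k-LCA vertex for some k ≥ 1, i.e., v ∈ LCA_G(A) for some A ⊆ X with |A| = k. Then for every ℓ with k ≤ ℓ ≤ |C_G(v)|, there exists A' ⊆ X with |A'| = ℓ and v ∈ LCA_G(A'). -/
/-- A vertex is a leaf if it has no outgoing edge. -/
def IsLeaf {V : Type*} (E : V → V → Prop) (v : V) : Prop := ∀ u, ¬ E v u

/-- The cluster of `v`: the set of leaves reachable from `v` (descendant leaves). -/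
def cluster {V : Type*} (E : V → V → Prop) (v : V) : Set V :=
  {x | IsLeaf E x ∧ Relation.ReflTransGen E v x}

/-- `v` is a least common ancestor of `A`: it is a common ancestor
(`A ⊆ cluster E v`) and no strict descendant of `v` is a common ancestor. -/
def IsLCA {V : Type*} (E : V → V → Prop) (A : Set V) (v : V) : Prop :=
  A ⊆ cluster E v ∧ ∀ w, Relation.TransGen E v w → ¬ A ⊆ cluster E w

/-- Acyclicity of a directed graph. -/
def Acyclic {V : Type*} (E : V → V → Prop) : Prop := ∀ v, ¬ Relation.TransGen E v v

/-- If `v` is a `k`-LCA vertex, then `v` is an `ℓ`-LCA vertex for all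
`k ≤ ℓ ≤ |C(v)|`. -/
theorem kLCA_to_ellLCA {V : Type*} [Fintype V] (E : V → V → Prop)
    (hacyc : Acyclic E) (v : V) (k : ℕ) (hk : 1 ≤ k)
    (A : Set V) (hAX : A ⊆ {x | IsLeaf E x}) (hAcard : A.ncard = k)
    (hvA : IsLCA E A v) :
    ∀ ℓ : ℕ, k ≤ ℓ → ℓ ≤ (cluster E v).ncard →
      ∃ A' : Set V, A' ⊆ {x | IsLeaf E x} ∧ A'.ncard = ℓ ∧ IsLCA E A' v := by
  intro ℓ hkℓ hℓ
  obtain ⟨A', hAA', hA'c, hcard⟩ :=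
    Set.exists_subsuperset_card_eq hvA.1 (hAcard ▸ hkℓ) hℓ
  refine ⟨A', fun x hx => (hA'c hx).1, hcard, hA'c, fun w hw hsub => ?_⟩
  exact hvA.2 w hw (hAA'.trans hsub)
end

section
/- Let G be a DAG on X and v a vertex with v = lca_G(A) for some A ⊆ X (i.e., LCA_G(A) = {v}). Then for every A' with A ⊆ A' ⊆ C_G(v), LCA_G(A') = {v}. -/
/-- If `LCA(A) = {v}`, then `LCA(A') = {v}` for every `A'` with
`A ⊆ A' ⊆ C(v)`. -/
theorem unique_lca_extend {V : Type*} [Fintype V] (E : V → V → Prop)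
    (hacyc : Acyclic E) (v : V) (A : Set V) (hAX : A ⊆ {x | IsLeaf E x})
    (hvA : {w | IsLCA E A w} = {v}) :
    ∀ A' : Set V, A ⊆ A' → A' ⊆ cluster E v → {w | IsLCA E A' w} = {v} := by
  have hv : IsLCA E A v := by
    have : v ∈ ({v} : Set V) := rfl
    rw [← hvA] at this; exact this
  have wf : WellFounded (fun a b => Relation.TransGen E b a) := by
    haveI : IsTrans V (fun a b => Relation.TransGen E b a) :=
      ⟨fun a b c hab hbc => hbc.trans hab⟩
    haveI : IsIrrefl V (fun a b => Relation.TransGen E b a) := ⟨fun a h => hacyc a h⟩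
    exact Finite.wellFounded_of_trans_of_irrefl _
  intro A' hAA' hA'v
  ext w
  simp only [Set.mem_setOf_eq, Set.mem_singleton_iff]
  constructor
  · intro hw
    have hAw : A ⊆ cluster E w := hAA'.trans hw.1
    obtain ⟨m, ⟨hmw, hmA⟩, hmin⟩ := wf.has_min
      {u | Relation.ReflTransGen E w u ∧ A ⊆ cluster E u}
      ⟨w, Relation.ReflTransGen.refl, hAw⟩
    have hmLCA : IsLCA E A m :=
      ⟨hmA, fun u hu hAu => hmin u ⟨hmw.trans hu.to_reflTransGen, hAu⟩ hu⟩
    have hmv : m = v := by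
      have : m ∈ {w | IsLCA E A w} := hmLCA
      rw [hvA] at this; exact this
    subst hmv
    rcases (Relation.reflTransGen_iff_eq_or_transGen.mp hmw) with h | h
    · exact h.symm
    · exact absurd hA'v (hw.2 m h)
  · rintro rfl
    exact ⟨hA'v, fun u hu hAu => hv.2 u hu (hAA'.trans hAu)⟩
end

section
/- For a DAG G on X and a vertex v, the following are equivalent: (1) v is not a k-LCA vertex for any k ∈ {1,...,|X|}; (2) some child u of v satisfies C_G(u) = C_G(v); (3) v ∉ LCA_G(C_G(v)). -/
lemma cluster_mono {V : Type*} (E : V → V → Prop) {v w : V}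
    (h : Relation.ReflTransGen E v w) : cluster E w ⊆ cluster E v := by
  rintro x ⟨hx, hwx⟩
  exact ⟨hx, h.trans hwx⟩

lemma exists_leaf {V : Type*} [Fintype V] (E : V → V → Prop)
    (hacyc : Acyclic E) (v : V) :
    ∃ x, IsLeaf E x ∧ Relation.ReflTransGen E v x := by
  have hirr : IsIrrefl V (Relation.TransGen (flip E)) := by
    constructor
    intro a ha
    exact hacyc a ((Relation.transGen_swap).mp ha)
  have hwf' : WellFounded (Relation.TransGen (flip E)) :=
    Finite.wellFounded_of_trans_of_irrefl _
  have hwf : WellFounded (flip E) :=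
    Subrelation.wf (fun h => Relation.TransGen.single h) hwf'
  induction v using hwf.induction with
  | _ v ih =>
    by_cases hv : ∃ u, E v u
    · obtain ⟨u, hu⟩ := hv
      obtain ⟨x, hx, hux⟩ := ih u hu
      exact ⟨x, hx, Relation.ReflTransGen.head hu hux⟩
    · exact ⟨v, fun u hu => hv ⟨u, hu⟩, Relation.ReflTransGen.refl⟩

/-- Characterization of vertices that are not `k`-LCA vertices for any `k`. -/
theorem not_kLCA_characterization {V : Type*} [Fintype V] (E : V → V → Prop)
    (hacyc : Acyclic E) (v : V) :
    ((¬ ∃ k : ℕ, 1 ≤ k ∧ k ≤ {x | IsLeaf E x}.ncard ∧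
        ∃ A : Set V, A ⊆ {x | IsLeaf E x} ∧ A.ncard = k ∧ IsLCA E A v) ↔
      (∃ u, E v u ∧ cluster E u = cluster E v)) ∧
    ((∃ u, E v u ∧ cluster E u = cluster E v) ↔ ¬ IsLCA E (cluster E v) v) := by
  have h23 : (∃ u, E v u ∧ cluster E u = cluster E v) ↔ ¬ IsLCA E (cluster E v) v := by
    constructor
    · rintro ⟨u, hvu, hcl⟩ ⟨_, h2⟩
      exact h2 u (Relation.TransGen.single hvu) (by rw [hcl])
    · intro h
      rw [IsLCA, not_and_or] at h
      rcases h with h | h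
      · exact absurd subset_rfl h
      · push_neg at h
        obtain ⟨w, hvw, hsub⟩ := h
        obtain ⟨u, hvu, huw⟩ := Relation.TransGen.head'_iff.mp hvw
        refine ⟨u, hvu, ?_⟩
        apply subset_antisymm
        · exact cluster_mono E (Relation.ReflTransGen.single hvu)
        · exact hsub.trans ((cluster_mono E huw))
  refine ⟨?_, h23⟩
  constructor
  · intro h
    by_contra h2
    apply h
    have hLCA : IsLCA E (cluster E v) v := by
      by_contra h3
      exact h2 (h23.mpr h3)
    obtain ⟨x, hx, hvx⟩ := exists_leaf E hacyc v
    have hne : (cluster E v).Nonempty := ⟨x, hx, hvx⟩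
    have hfin : (cluster E v).Finite := Set.toFinite _
    have hsub : cluster E v ⊆ {x | IsLeaf E x} := fun y hy => hy.1
    refine ⟨(cluster E v).ncard, ?_, ?_, cluster E v, hsub, rfl, hLCA⟩
    · exact (Set.ncard_pos hfin).mpr hne
    · exact Set.ncard_le_ncard hsub (Set.toFinite _)
  · rintro ⟨u, hvu, hcl⟩ ⟨k, _, _, A, _, _, hA1, hA2⟩
    exact hA2 u (Relation.TransGen.single hvu) (by rw [hcl]; exact hA1)
end

section
/- A DAG G is LCA-relevant (every vertex is a least common ancestor of some subset of leaves) if and only if no edge (u,v) of G satisfies C_G(u) = C_G(v). -/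
/-- A DAG is LCA-relevant iff no edge joins two vertices with the same cluster. -/
theorem LCArel_iff_no_edge_same_cluster {V : Type*} [Fintype V] (E : V → V → Prop)
    (hacyc : Acyclic E) :
    (∀ v : V, ∃ A : Set V, A ⊆ {x | IsLeaf E x} ∧ IsLCA E A v) ↔
      ∀ u v : V, E u v → cluster E u ≠ cluster E v := by
  have mono : ∀ v w : V, Relation.ReflTransGen E v w → cluster E w ⊆ cluster E v := by
    intro v w hvw x hx
    exact ⟨hx.1, hvw.trans hx.2⟩
  constructor
  · intro h u v huv heq
    obtain ⟨A, _, hAsub, hmin⟩ := h u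
    exact hmin v (Relation.TransGen.single huv) (heq ▸ hAsub)
  · intro h v
    refine ⟨cluster E v, fun x hx => hx.1, subset_rfl, ?_⟩
    intro w hw
    induction hw with
    | single hvw =>
      intro hsub
      exact h v _ hvw (le_antisymm hsub (mono v _ (Relation.ReflTransGen.single hvw)))
    | tail hvc hcw ih =>
      intro hsub
      exact ih (hsub.trans (mono _ _ (Relation.ReflTransGen.single hcw)))
end

section
/- An LCA-relevant DAG has no vertex of out-degree 1. -/
/-- An LCA-relevant DAG has no vertex of out-degree one. -/
theorem LCArel_no_outdeg_one {V : Type*} [Fintype V] (E : V → V → Prop)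
    (hacyc : Acyclic E)
    (hrel : ∀ v : V, ∃ A : Set V, A ⊆ {x | IsLeaf E x} ∧ IsLCA E A v) :
    ∀ v : V, {u | E v u}.ncard ≠ 1 := by
  intro v hv
  obtain ⟨u, hu⟩ := Set.ncard_eq_one.mp hv
  have hEvu : E v u := by
    have : u ∈ {u' | E v u'} := hu ▸ Set.mem_singleton u
    exact this
  obtain ⟨A, _hAleaf, hsub, hmin⟩ := hrel v
  refine hmin u (Relation.TransGen.single hEvu) ?_
  intro a ha
  obtain ⟨hleaf, hreach⟩ := hsub ha
  rcases Relation.ReflTransGen.cases_head hreach with heq | ⟨c, hvc, hca⟩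
  · exact absurd hEvu (heq ▸ hleaf u)
  · have hc : c ∈ ({u} : Set V) := hu ▸ (hvc : c ∈ {u' | E v u'})
    exact ⟨hleaf, hc ▸ hca⟩
end

section
/- A DAG G is lca-relevant (every vertex v satisfies LCA_G(A) = {v} for some A ⊆ X) if and only if for all vertices u,v: C_G(u) ⊆ C_G(v) holds iff u ≼_G v. -/
/-- A DAG is lca-relevant iff cluster inclusion coincides with the ancestor
order: `C(u) ⊆ C(v)` ↔ `u ≼ v`. -/
theorem lcarel_iff_cluster_order {V : Type*} [Fintype V] (E : V → V → Prop)
    (hacyc : Acyclic E) :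
    (∀ v : V, ∃ A : Set V, A ⊆ {x | IsLeaf E x} ∧ {w | IsLCA E A w} = {v}) ↔
      ∀ u v : V, cluster E u ⊆ cluster E v ↔ Relation.ReflTransGen E v u := by
  have exists_lca : ∀ (A : Set V) (v : V), A ⊆ cluster E v →
      ∃ w, Relation.ReflTransGen E v w ∧ IsLCA E A w := by
    intro A
    have hwf : WellFounded (fun a b : V => Relation.TransGen E b a) := by
      have h1 : IsTrans V (fun a b => Relation.TransGen E b a) :=
        ⟨fun a b c h1 h2 => h2.trans h1⟩
      have h2 : IsIrrefl V (fun a b => Relation.TransGen E b a) := ⟨fun a h => hacyc a h⟩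
      exact Finite.wellFounded_of_trans_of_irrefl _
    intro v
    induction v using hwf.induction with
    | _ v ih =>
      intro hA
      by_cases h : ∀ w, Relation.TransGen E v w → ¬ A ⊆ cluster E w
      · exact ⟨v, Relation.ReflTransGen.refl, hA, h⟩
      · push_neg at h
        obtain ⟨w, hw, hAw⟩ := h
        obtain ⟨u, hu, hlca⟩ := ih w hw hAw
        exact ⟨u, hw.to_reflTransGen.trans hu, hlca⟩
  constructor
  · intro hrel u v
    constructor
    · intro hsub
      obtain ⟨A, _, hset⟩ := hrel u
      have hu : IsLCA E A u := by
        have : u ∈ ({w | IsLCA E A w} : Set V) := by rw [hset]; rfl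
        exact this
      have hAv : A ⊆ cluster E v := fun x hx => hsub (hu.1 hx)
      obtain ⟨w, hvw, hlca⟩ := exists_lca A v hAv
      have : w ∈ ({u} : Set V) := by rw [← hset]; exact hlca
      rw [Set.mem_singleton_iff] at this
      rwa [this] at hvw
    · intro h x hx
      exact ⟨hx.1, h.trans hx.2⟩
  · intro h v
    refine ⟨cluster E v, fun x hx => hx.1, ?_⟩
    ext w
    simp only [Set.mem_setOf_eq, Set.mem_singleton_iff]
    constructor
    · intro ⟨hsub, hmin⟩
      have hwv : Relation.ReflTransGen E w v := (h v w).mp hsub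
      rcases hwv.cases_head with heq | ⟨c, hwc, hcv⟩
      · exact heq
      · exact absurd (subset_refl _)
          (hmin v (Relation.TransGen.head' hwc hcv))
    · rintro rfl
      refine ⟨subset_refl _, fun w' hw' hsub => ?_⟩
      have : Relation.ReflTransGen E w' w := (h w w').mp hsub
      exact hacyc w' (Relation.TransGen.trans_right this hw')
end

section
/- If a DAG G satisfies (PCC) and is LCA-relevant, then the cluster map is injective: distinct vertices u ≠ v of G have distinct clusters C_G(u) ≠ C_G(v). -/
/-- In an LCA-relevant DAG with the (PCC) property, the cluster map is
injective. -/
theorem PCC_LCArel_cluster_injective {V : Type*} [Fintype V] (E : V → V → Prop)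
    (hacyc : Acyclic E)
    (hPCC : ∀ u v : V,
      (Relation.ReflTransGen E v u ∨ Relation.ReflTransGen E u v) ↔
        (cluster E u ⊆ cluster E v ∨ cluster E v ⊆ cluster E u))
    (hrel : ∀ v : V, ∃ A : Set V, A ⊆ {x | IsLeaf E x} ∧ IsLCA E A v) :
    ∀ u v : V, u ≠ v → cluster E u ≠ cluster E v := by
  intro u v hne heq
  have hcomp : Relation.ReflTransGen E v u ∨ Relation.ReflTransGen E u v :=
    (hPCC u v).mpr (Or.inl (le_of_eq heq))
  rcases hcomp with h | h
  · rcases (Relation.reflTransGen_iff_eq_or_transGen.mp h) with h' | h'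
    · exact hne h'
    · obtain ⟨A, -, hAsub, hmin⟩ := hrel v
      exact hmin u h' (heq ▸ hAsub)
  · rcases (Relation.reflTransGen_iff_eq_or_transGen.mp h) with h' | h'
    · exact hne h'.symm
    · obtain ⟨A, -, hAsub, hmin⟩ := hrel u
      exact hmin v h' (heq ▸ hAsub)
end

section
/- For a grounded set system 𝔠 on a finite set X (i.e., {x} ∈ 𝔠 for all x ∈ X and ∅ ∉ 𝔠), the Hasse diagram of 𝔠 ordered by inclusion has no element of out-degree 1; that is, every non-minimal C ∈ 𝔠 covers at least two elements of 𝔠. -/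
/-- Auxiliary: every element of `C` lies in some member of `𝔠` covered by `C`. -/
lemma exists_covered_mem {X : Type*} [Fintype X] (𝔠 : Set (Set X))
    (hsingle : ∀ x : X, {x} ∈ 𝔠) (C : Set X) (x : X) (hx : x ∈ C)
    (hne : ({x} : Set X) ≠ C) :
    ∃ B ∈ 𝔠, x ∈ B ∧ B ⊂ C ∧ ¬ ∃ D ∈ 𝔠, B ⊂ D ∧ D ⊂ C := by
  set S : Set (Set X) := {B | B ∈ 𝔠 ∧ x ∈ B ∧ B ⊂ C} with hS
  have hSne : S.Nonempty := ⟨{x}, hsingle x, rfl,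
    ssubset_of_subset_of_ne (Set.singleton_subset_iff.2 hx) hne⟩
  obtain ⟨B, hBS, hmax⟩ : ∃ B ∈ S, ∀ D ∈ S, B ≤ D → B = D := by
    obtain ⟨B, hBS, hm⟩ := Set.Finite.exists_maximalFor id S S.toFinite hSne
    exact ⟨B, hBS, fun D hD h => le_antisymm h (hm hD h)⟩
  refine ⟨B, hBS.1, hBS.2.1, hBS.2.2, ?_⟩
  rintro ⟨D, hD, hBD, hDC⟩
  have : B = D := hmax D ⟨hD, hBD.subset hBS.2.1, hDC⟩ hBD.le
  exact hBD.ne this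

/-- In the Hasse diagram of a grounded set system, every non-minimal member
covers at least two members (no out-degree-one vertices). -/
theorem grounded_hasse_no_outdeg_one {X : Type*} [Fintype X] (𝔠 : Set (Set X))
    (hsingle : ∀ x : X, {x} ∈ 𝔠) (hempty : ∅ ∉ 𝔠)
    (C : Set X) (hC : C ∈ 𝔠) (hnonmin : ∃ B ∈ 𝔠, B ⊂ C) :
    ∃ B₁ ∈ 𝔠, ∃ B₂ ∈ 𝔠, B₁ ≠ B₂ ∧
      (B₁ ⊂ C ∧ ¬ ∃ D ∈ 𝔠, B₁ ⊂ D ∧ D ⊂ C) ∧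
      (B₂ ⊂ C ∧ ¬ ∃ D ∈ 𝔠, B₂ ⊂ D ∧ D ⊂ C) := by
  obtain ⟨B, hB, hBC⟩ := hnonmin
  -- B is nonempty, pick x ∈ B ⊆ C and y ∈ C \ B
  have hBne : B.Nonempty := Set.nonempty_iff_ne_empty.2 (fun h => hempty (h ▸ hB))
  obtain ⟨x, hxB⟩ := hBne
  have hxC : x ∈ C := hBC.subset hxB
  obtain ⟨y, hyC, hyB⟩ := Set.exists_of_ssubset hBC
  have hxy : x ≠ y := fun h => hyB (h ▸ hxB)
  have hxne : ({x} : Set X) ≠ C := fun h => hyB (by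
    have : y ∈ ({x} : Set X) := h ▸ hyC
    simp only [Set.mem_singleton_iff] at this
    exact (hxy this.symm).elim)
  obtain ⟨B₁, hB₁, hxB₁, hB₁C, hmax₁⟩ := exists_covered_mem 𝔠 hsingle C x hxC hxne
  -- pick z ∈ C \ B₁
  obtain ⟨z, hzC, hzB₁⟩ := Set.exists_of_ssubset hB₁C
  have hxz : x ≠ z := fun h => hzB₁ (h ▸ hxB₁)
  have hzne : ({z} : Set X) ≠ C := fun h => by
    have : x ∈ ({z} : Set X) := h ▸ hxC
    simp only [Set.mem_singleton_iff] at this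
    exact hxz this
  obtain ⟨B₂, hB₂, hzB₂, hB₂C, hmax₂⟩ := exists_covered_mem 𝔠 hsingle C z hzC hzne
  refine ⟨B₁, hB₁, B₂, hB₂, fun h => hzB₁ (h ▸ hzB₂), ⟨hB₁C, hmax₁⟩, ⟨hB₂C, hmax₂⟩⟩
end

section
/- In an lca-relevant DAG G, the number of vertices equals the number of distinct clusters: |V(G)| = |𝔠_G| where 𝔠_G = { C_G(v) : v ∈ V(G) }. In particular, |V(G)| ≤ 2^{|X|}. -/
/-- Descend to an LCA. -/
lemma exists_lca {V : Type*} [Fintype V] (E : V → V → Prop) (hacyc : Acyclic E)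
    (A : Set V) : ∀ w, A ⊆ cluster E w →
      ∃ u, Relation.ReflTransGen E w u ∧ IsLCA E A u := by
  have : IsTrans V (fun u w => Relation.TransGen E w u) :=
    ⟨fun a b c h1 h2 => h2.trans h1⟩
  have : IsIrrefl V (fun u w => Relation.TransGen E w u) := ⟨fun a h => hacyc a h⟩
  have hwf : WellFounded (fun u w => Relation.TransGen E w u) :=
    Finite.wellFounded_of_trans_of_irrefl _
  intro w
  induction w using hwf.induction with
  | _ w ih =>
    intro hw
    by_cases h : ∀ u, Relation.TransGen E w u → ¬ A ⊆ cluster E u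
    · exact ⟨w, Relation.ReflTransGen.refl, hw, h⟩
    · push_neg at h
      obtain ⟨u, hu, hAu⟩ := h
      obtain ⟨z, hz, hzl⟩ := ih u hu hAu
      exact ⟨z, (hu.to_reflTransGen).trans hz, hzl⟩

lemma cluster_injective {V : Type*} [Fintype V] (E : V → V → Prop)
    (hacyc : Acyclic E)
    (hrel : ∀ v : V, ∃ A : Set V, A ⊆ {x | IsLeaf E x} ∧ {w | IsLCA E A w} = {v}) :
    Function.Injective (cluster E) := by
  have key : ∀ v w : V, cluster E v = cluster E w → Relation.ReflTransGen E w v := by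
    intro v w h
    obtain ⟨A, -, hA⟩ := hrel v
    have hv : IsLCA E A v := by
      have : v ∈ {w | IsLCA E A w} := by rw [hA]; rfl
      exact this
    have hAw : A ⊆ cluster E w := by rw [← h]; exact hv.1
    obtain ⟨u, hwu, hu⟩ := exists_lca E hacyc A w hAw
    have : u ∈ {w | IsLCA E A w} := hu
    rw [hA] at this
    rw [Set.mem_singleton_iff] at this
    rwa [this] at hwu
  intro v w h
  have h1 := key v w h
  have h2 := key w v h.symm
  by_contra hne
  rcases h1.cases_head with h | ⟨c, hc, hcv⟩
  · exact hne h.symm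
  · have t1 : Relation.TransGen E w v := Relation.TransGen.head' hc hcv
    rcases h2.cases_head with h | ⟨d, hd, hdw⟩
    · exact hne h
    · exact hacyc v ((Relation.TransGen.head' hd hdw).trans t1)

/-- In an lca-relevant DAG, the number of vertices equals the number of
distinct clusters; in particular it is at most `2 ^ |X|`. -/
theorem lcarel_card_eq_card_clusters {V : Type*} [Fintype V] (E : V → V → Prop)
    (hacyc : Acyclic E)
    (hrel : ∀ v : V, ∃ A : Set V, A ⊆ {x | IsLeaf E x} ∧ {w | IsLCA E A w} = {v}) :
    Fintype.card V = {C : Set V | ∃ v : V, C = cluster E v}.ncard ∧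
      Fintype.card V ≤ 2 ^ {x | IsLeaf E x}.ncard := by
  have hinj := cluster_injective E hacyc hrel
  have hset : {C : Set V | ∃ v : V, C = cluster E v} = Set.range (cluster E) := by
    ext C; simp [eq_comm, Set.range]
  constructor
  · rw [hset, ← Set.image_univ, Set.ncard_image_of_injective _ hinj,
      Set.ncard_univ, Nat.card_eq_fintype_card]
  · -- inject V into subsets of leaves
    classical
    set L := {x : V | IsLeaf E x}
    have hsub : ∀ v, cluster E v ⊆ L := fun v x hx => hx.1
    let f : V → Set L := fun v => {x : L | (x : V) ∈ cluster E v}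
    have hfinj : Function.Injective f := by
      intro v w h
      apply hinj
      ext x
      constructor
      · intro hx
        have : (⟨x, hsub v hx⟩ : L) ∈ f v := hx
        rw [h] at this
        exact this
      · intro hx
        have : (⟨x, hsub w hx⟩ : L) ∈ f w := hx
        rw [← h] at this
        exact this
    have := Fintype.card_le_of_injective f hfinj
    calc Fintype.card V ≤ Fintype.card (Set L) := this
      _ = 2 ^ Fintype.card L := by simp [Fintype.card_set]
      _ = 2 ^ L.ncard := by rw [Set.ncard_eq_toFinset_card', Set.toFinset_card]
end

section
/- Let G be a DAG on X and v an inner vertex. In G ⊖ v (the graph obtained by deleting v and connecting every parent of v to every child of v), for all vertices p,q ≠ v: p ≼_{G⊖v} q iff p ≼_G q; consequently C_{G⊖v}(u) = C_G(u) for all u ≠ v, and G ⊖ v is a DAG on X. -/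
/-- The edge relation of `G ⊖ v`: delete `v` and join each parent of `v` to
each child of `v`. -/
def ominus {V : Type*} (E : V → V → Prop) (v : V) : V → V → Prop :=
  fun p q => (p ≠ v ∧ q ≠ v) ∧ (E p q ∨ (E p v ∧ E v q))

private lemma ominus_rtg_of_rtg {V : Type*} {E : V → V → Prop}
    (hacyc : Acyclic E) {v p : V} (hp : p ≠ v) :
    ∀ q : V, Relation.ReflTransGen E q p →
      ((q ≠ v → Relation.ReflTransGen (ominus E v) q p) ∧
       (q = v → ∀ r, r ≠ v → E r v → Relation.ReflTransGen (ominus E v) r p)) := by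
  intro q hqp
  induction hqp using Relation.ReflTransGen.head_induction_on with
  | refl =>
    refine ⟨fun _ => .refl, fun hq => absurd (hq ▸ rfl) hp⟩
  | head hqc _ ih =>
    rename_i q c _
    constructor
    · intro hq
      by_cases hc : c = v
      · exact ih.2 hc q hq (hc ▸ hqc)
      · exact Relation.ReflTransGen.head ⟨⟨hq, hc⟩, Or.inl hqc⟩ (ih.1 hc)
    · intro hq r hr hrv
      have hqc' : E v c := hq ▸ hqc
      have hc : c ≠ v := fun h => hacyc v (Relation.TransGen.single (by rw [h] at hqc'; exact hqc'))
      exact Relation.ReflTransGen.head ⟨⟨hr, hc⟩, Or.inr ⟨hrv, hqc'⟩⟩ (ih.1 hc)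

private lemma rtg_of_ominus_rtg {V : Type*} {E : V → V → Prop} {v p q : V}
    (h : Relation.ReflTransGen (ominus E v) q p) : Relation.ReflTransGen E q p := by
  induction h with
  | refl => exact .refl
  | tail _ hstep ih =>
    rcases hstep with ⟨_, h' | ⟨h1, h2⟩⟩
    · exact ih.tail h'
    · exact (ih.tail h1).tail h2

private lemma ominus_ne_of_rtg {V : Type*} {E : V → V → Prop} {v u x : V}
    (hu : u ≠ v) (h : Relation.ReflTransGen (ominus E v) u x) : x ≠ v := by
  induction h with
  | refl => exact hu
  | tail _ hstep _ => exact hstep.1.2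

/-- For an inner vertex `v`, the operation `G ⊖ v` preserves reachability
among the remaining vertices, preserves clusters, preserves leaves, and
yields again a DAG. -/
theorem ominus_properties {V : Type*} [Fintype V] (E : V → V → Prop)
    (hacyc : Acyclic E) (v : V) (hv : ¬ IsLeaf E v) :
    (∀ p q : V, p ≠ v → q ≠ v →
        (Relation.ReflTransGen (ominus E v) q p ↔ Relation.ReflTransGen E q p)) ∧
    (∀ u : V, u ≠ v → cluster (ominus E v) u = cluster E u) ∧
    (∀ x : V, x ≠ v → (IsLeaf (ominus E v) x ↔ IsLeaf E x)) ∧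
    Acyclic (ominus E v) := by
  have hreach : ∀ p q : V, p ≠ v → q ≠ v →
      (Relation.ReflTransGen (ominus E v) q p ↔ Relation.ReflTransGen E q p) := by
    intro p q hp hq
    exact ⟨rtg_of_ominus_rtg, fun h => (ominus_rtg_of_rtg hacyc hp q h).1 hq⟩
  have hleaf : ∀ x : V, x ≠ v → (IsLeaf (ominus E v) x ↔ IsLeaf E x) := by
    intro x hx
    constructor
    · intro hL u hEu
      by_cases huv : u = v
      · simp only [IsLeaf, not_forall, not_not] at hv
        obtain ⟨w, hw⟩ := hv
        have hwv : w ≠ v := fun h => hacyc v (Relation.TransGen.single (by rw [h] at hw; exact hw))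
        exact hL w ⟨⟨hx, hwv⟩, Or.inr ⟨huv ▸ hEu, hw⟩⟩
      · exact hL u ⟨⟨hx, huv⟩, Or.inl hEu⟩
    · rintro hL u ⟨_, h | ⟨h1, _⟩⟩
      · exact hL u h
      · exact hL v h1
  refine ⟨hreach, ?_, hleaf, ?_⟩
  · intro u hu
    ext x
    simp only [cluster, Set.mem_setOf_eq]
    constructor
    · rintro ⟨hxl, hxr⟩
      have hxv : x ≠ v := ominus_ne_of_rtg hu hxr
      exact ⟨(hleaf x hxv).1 hxl, rtg_of_ominus_rtg hxr⟩
    · rintro ⟨hxl, hxr⟩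
      have hxv : x ≠ v := by rintro rfl; exact hv hxl
      exact ⟨(hleaf x hxv).2 hxl, (hreach x u hxv hu).2 hxr⟩
  · have key : ∀ x y : V, Relation.TransGen (ominus E v) x y → Relation.TransGen E x y := by
      intro x y h
      induction h with
      | single hstep =>
        rcases hstep with ⟨_, h | ⟨h1, h2⟩⟩
        · exact .single h
        · exact (Relation.TransGen.single h1).tail h2
      | tail _ hstep ih =>
        rcases hstep with ⟨_, h | ⟨h1, h2⟩⟩
        · exact ih.tail h
        · exact (ih.tail h1).tail h2
    exact fun x hx => hacyc x (key x x hx)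
end
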